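/- Let X be a countable subshift over a finite alphabet A and let c ∈ X be at level 1. Suppose that every pattern appearing in c appears at infinitely many positions in c. Then c admits a direction of periodicity (there is a nonzero v ∈ ℤ×ℤ with σ_v c = c), but c is not periodic: any two vectors v, w with σ_v c = c and σ_w c = c are linearly dependent. -/

import Mathlib

namespace CountableSubshift

/-- A configuration over alphabet `A` on the plane `ℤ × ℤ`. -/
abbrev Config (A : Type*) := ℤ × ℤ → A

variable {A : Type*}

/-- The shift by a vector `v`. -/
def shift (v : ℤ × ℤ) (x : Config A) : Config A := fun u => x (u + v)

/-- The shift-orbit of a configuration. -/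
def orbit (x : Config A) : Set (Config A) := Set.range fun v => shift v x

variable [TopologicalSpace A]

/-- `Preceq x y` iff `x` belongs to the closure of the shift-orbit of `y`. -/
def Preceq (x y : Config A) : Prop := x ∈ closure (orbit y)

/-- Strict version of `Preceq`. -/
def Prec (x y : Config A) : Prop := Preceq x y ∧ ¬ Preceq y x

/-- `x ≈ y` : mutual `Preceq`. -/
def OrbEquiv (x y : Config A) : Prop := Preceq x y ∧ Preceq y x

/-- A subshift: nonempty, closed and shift-invariant set of configurations. -/
def IsSubshift (X : Set (Config A)) : Prop :=
  X.Nonempty ∧ IsClosed X ∧ ∀ v : ℤ × ℤ, shift v '' X = X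

/-- A configuration is periodic if it has two linearly independent vectors of periodicity. -/
def Periodic (x : Config A) : Prop :=
  ∃ v w : ℤ × ℤ, shift v x = x ∧ shift w x = x ∧ LinearIndependent ℤ ![v, w]

/-- `x` is at level 0 in `X`: it is `Preceq`-minimal in `X`. -/
def Level0 (X : Set (Config A)) (x : Config A) : Prop :=
  x ∈ X ∧ ∀ y ∈ X, Preceq y x → Preceq x y

/-- `x` is at level 1 in `X`. -/
def Level1 (X : Set (Config A)) (x : Config A) : Prop :=
  x ∈ X ∧ ¬ Level0 X x ∧ ∀ y ∈ X, Prec y x → Level0 X y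

/-- `x` is at level 2 in `X`. -/
def Level2 (X : Set (Config A)) (x : Config A) : Prop :=
  x ∈ X ∧ ¬ Level0 X x ∧ ¬ Level1 X x ∧ ∀ y ∈ X, Prec y x → Level0 X y ∨ Level1 X y

/-- The pattern `p` with (finite) domain `D` appears in `x` at position `u`. -/
def AppearsAt (D : Finset (ℤ × ℤ)) (p : ℤ × ℤ → A) (x : Config A) (u : ℤ × ℤ) : Prop :=
  ∀ d ∈ D, x (u + d) = p d

/-- A subshift of finite type: the nonempty set of configurations avoiding a
finite family of forbidden patterns. -/
def IsSFT (X : Set (Config A)) : Prop :=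
  X.Nonempty ∧ ∃ (n : ℕ) (D : Fin n → Finset (ℤ × ℤ)) (p : Fin n → ℤ × ℤ → A),
    X = {x : Config A | ∀ (i : Fin n) (u : ℤ × ℤ), ¬ AppearsAt (D i) (p i) x u}

/-- Every pattern appearing in `c` appears at infinitely many positions. -/
def AllPatternsInfinite (c : Config A) : Prop :=
  ∀ (D : Finset (ℤ × ℤ)) (u : ℤ × ℤ),
    {u' : ℤ × ℤ | ∀ d ∈ D, c (u' + d) = c (u + d)}.Infinite

/-- The standard dot product on `ℤ × ℤ`. -/
def dot (u w : ℤ × ℤ) : ℤ := u.1 * w.1 + u.2 * w.2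

section Aux

omit [TopologicalSpace A]

lemma shift_shift (v w : ℤ × ℤ) (x : Config A) : shift v (shift w x) = shift (w + v) x := by
  funext u; simp only [shift]; rw [add_assoc, add_comm v w]

lemma shift_zero (x : Config A) : shift 0 x = x := by funext u; simp [shift]

lemma shift_neg_fix {v : ℤ × ℤ} {c : Config A} (h : shift v c = c) : shift (-v) c = c := by
  have h2 := congrArg (shift (-v)) h
  rw [shift_shift, add_neg_cancel, shift_zero] at h2
  exact h2.symm

lemma shift_add_fix {a b : ℤ × ℤ} {c : Config A} (ha : shift a c = c) (hb : shift b c = c) :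
    shift (a + b) c = c := by
  rw [← shift_shift, ha, hb]

lemma shift_zsmul_fix (k : ℤ) {v : ℤ × ℤ} {c : Config A} (h : shift v c = c) :
    shift (k • v) c = c := by
  induction k using Int.induction_on with
  | zero => simpa using shift_zero c
  | succ i ih =>
      have e : ((i : ℤ) + 1) • v = (i : ℤ) • v + v := by rw [add_smul, one_smul]
      rw [e]; exact shift_add_fix ih h
  | pred i ih =>
      have e : (-(i : ℤ) - 1) • v = (-(i : ℤ)) • v + -v := by
        rw [sub_smul, one_smul, sub_eq_add_neg]
      rw [e]; exact shift_add_fix ih (shift_neg_fix h)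

lemma orbit_image (v : ℤ × ℤ) (x : Config A) : shift v '' orbit x = orbit x := by
  apply Set.eq_of_subset_of_subset
  · rintro _ ⟨_, ⟨w, rfl⟩, rfl⟩
    rw [shift_shift]; exact ⟨w + v, rfl⟩
  · rintro _ ⟨w, rfl⟩
    exact ⟨shift (w - v) x, ⟨w - v, rfl⟩, by rw [shift_shift, sub_add_cancel]⟩

end Aux

def shiftHomeo (v : ℤ × ℤ) : Config A ≃ₜ Config A where
  toFun := shift v
  invFun := shift (-v)
  left_inv x := by rw [shift_shift, add_neg_cancel, shift_zero]
  right_inv x := by rw [shift_shift, neg_add_cancel, shift_zero]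
  continuous_toFun := continuous_pi fun u => continuous_apply (u + v)
  continuous_invFun := continuous_pi fun u => continuous_apply (u + -v)

lemma accPt_shift (v : ℤ × ℤ) {Y : Set (Config A)} (hinv : shift v '' Y = Y)
    {c : Config A} (h : AccPt c (Filter.principal Y)) :
    AccPt (shift v c) (Filter.principal Y) := by
  have h2 : (Filter.map (shift v) (nhdsWithin c {c}ᶜ ⊓ Filter.principal Y)).NeBot :=
    Filter.NeBot.map h _
  refine h2.mono (le_inf ?_ ?_)
  · refine le_trans (Filter.map_mono inf_le_left) ?_
    exact le_of_eq ((shiftHomeo v).map_punctured_nhds_eq c)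
  · refine le_trans (Filter.map_mono inf_le_right) ?_
    rw [Filter.map_principal, hinv]

lemma not_countable_cantor : ¬ Countable (ℕ → Bool) := by
  intro h
  have e : Set ℕ ≃ (ℕ → Bool) := Equiv.arrowCongr (Equiv.refl ℕ) Equiv.propEquivBool
  have : Countable (Set ℕ) := Countable.of_equiv _ e.symm
  obtain ⟨f, hf⟩ := exists_injective_nat (Set ℕ)
  exact Function.cantor_injective f hf


theorem stmt4 {A : Type*} [Fintype A] [Nonempty A] [TopologicalSpace A] [DiscreteTopology A]
    (X : Set (Config A)) (hX : IsSubshift X) (hcount : X.Countable)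
    (c : Config A) (hc : Level1 X c) (hpat : AllPatternsInfinite c) :
    (∃ v : ℤ × ℤ, v ≠ 0 ∧ shift v c = c) ∧
      ∀ v w : ℤ × ℤ, shift v c = c → shift w c = c → ¬ LinearIndependent ℤ ![v, w] := by
  obtain ⟨hcX, hnot0, -⟩ := hc
  constructor
  · -- existence of a direction of periodicity
    set Y : Set (Config A) := closure (orbit c) with hYdef
    have horbX : orbit c ⊆ X := by
      rintro _ ⟨v, rfl⟩
      rw [← hX.2.2 v]; exact ⟨c, hcX, rfl⟩
    have hYX : Y ⊆ X := hX.2.1.closure_subset_iff.mpr horbX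
    have hYcnt : Y.Countable := hcount.mono hYX
    have hcY : c ∈ Y := subset_closure ⟨0, shift_zero c⟩
    have hYinv : ∀ v : ℤ × ℤ, shift v '' Y = Y := by
      intro v
      have h1 := (shiftHomeo (A := A) v).image_closure (orbit c)
      have h2 : ⇑(shiftHomeo (A := A) v) = shift v := rfl
      rw [h2, orbit_image] at h1
      exact h1
    have hiso : ¬ AccPt c (Filter.principal Y) := by
      intro hacc
      have haccAll : ∀ y ∈ Y, AccPt y (Filter.principal Y) := by
        intro y hy
        by_cases hny : AccPt y (Filter.principal Y)
        · exact hny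
        rw [accPt_iff_nhds] at hny
        push_neg at hny
        obtain ⟨U, hU, hU2⟩ := hny
        obtain ⟨z, hzU, hzorb⟩ := mem_closure_iff_nhds.mp hy U hU
        obtain ⟨v, rfl⟩ := hzorb
        have he : shift v c = y := hU2 _ ⟨hzU, subset_closure ⟨v, rfl⟩⟩
        rw [← he]
        exact accPt_shift v (hYinv v) hacc
      have hperf : Perfect Y := ⟨isClosed_closure, haccAll⟩
      letI := TopologicalSpace.upgradeIsCompletelyMetrizable (Config A)
      obtain ⟨f, hfY, -, hfinj⟩ := hperf.exists_nat_bool_injection ⟨c, hcY⟩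
      haveI := (hYcnt.mono hfY).to_subtype
      exact not_countable_cantor
        (Countable.of_equiv _ (Equiv.ofInjective f hfinj).symm)
    rw [accPt_iff_nhds] at hiso
    push_neg at hiso
    obtain ⟨U, hU, hU2⟩ := hiso
    rw [nhds_pi, Filter.mem_pi'] at hU
    obtain ⟨I, t, ht, htU⟩ := hU
    obtain ⟨u, huS, hu0⟩ := ((hpat I 0).diff (Set.finite_singleton 0)).nonempty
    have hmem : shift u c ∈ U := by
      apply htU
      intro i hi
      have hx : shift u c i = c i := by
        show c (i + u) = c i
        rw [add_comm]
        have h3 := huS i hi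
        rwa [zero_add] at h3
      rw [hx]
      exact mem_of_mem_nhds (ht i)
    have hper : shift u c = c := hU2 _ ⟨hmem, subset_closure ⟨u, rfl⟩⟩
    exact ⟨u, by simpa using hu0, hper⟩
  · -- no two independent periods
    intro v w hv hw hli
    rw [LinearIndependent.pair_iff] at hli
    set n : ℤ := v.1 * w.2 - v.2 * w.1 with hndef
    have rel1 : w.2 • v + (-v.2) • w = ((n : ℤ), (0 : ℤ)) := by
      rw [Prod.ext_iff]
      constructor <;> simp [Prod.smul_fst, Prod.smul_snd, smul_eq_mul, hndef] <;> ring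
    have rel2 : (-w.1) • v + v.1 • w = ((0 : ℤ), (n : ℤ)) := by
      rw [Prod.ext_iff]
      constructor <;> simp [Prod.smul_fst, Prod.smul_snd, smul_eq_mul, hndef] <;> ring
    have hn : n ≠ 0 := by
      intro h0
      have h1 : w.2 • v + (-v.2) • w = 0 := by rw [rel1, h0]; rfl
      have h2 : (-w.1) • v + v.1 • w = 0 := by rw [rel2, h0]; rfl
      obtain ⟨hw2, hv2⟩ := hli _ _ h1
      obtain ⟨hw1, hv1⟩ := hli _ _ h2
      have hv0 : v = 0 := Prod.ext hv1 (neg_eq_zero.mp hv2)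
      exact one_ne_zero (hli 1 0 (by simp [hv0])).1
    set m : ℕ := n.natAbs with hmdef
    have hm0 : (0 : ℤ) < (m : ℤ) := by
      exact_mod_cast Nat.pos_of_ne_zero (Int.natAbs_ne_zero.mpr hn)
    have hfix_n1 : shift ((n : ℤ), (0 : ℤ)) c = c := by
      rw [← rel1]; exact shift_add_fix (shift_zsmul_fix _ hv) (shift_zsmul_fix _ hw)
    have hfix_n2 : shift ((0 : ℤ), (n : ℤ)) c = c := by
      rw [← rel2]; exact shift_add_fix (shift_zsmul_fix _ hv) (shift_zsmul_fix _ hw)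
    have hfix1 : shift ((m : ℤ), (0 : ℤ)) c = c := by
      rcases Int.natAbs_eq n with h | h
      · have e : ((m : ℤ), (0 : ℤ)) = ((n : ℤ), (0 : ℤ)) := by rw [h]
        rw [e]; exact hfix_n1
      · have e : ((m : ℤ), (0 : ℤ)) = -((n : ℤ), (0 : ℤ)) := by
          rw [h, Prod.neg_mk, neg_neg, neg_zero]
        rw [e]; exact shift_neg_fix hfix_n1
    have hfix2 : shift ((0 : ℤ), (m : ℤ)) c = c := by
      rcases Int.natAbs_eq n with h | h
      · have e : ((0 : ℤ), (m : ℤ)) = ((0 : ℤ), (n : ℤ)) := by rw [h]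
        rw [e]; exact hfix_n2
      · have e : ((0 : ℤ), (m : ℤ)) = -((0 : ℤ), (n : ℤ)) := by
          rw [h, Prod.neg_mk, neg_neg, neg_zero]
        rw [e]; exact shift_neg_fix hfix_n2
    have horb_sub : orbit c ⊆
        (fun p : ℤ × ℤ => shift p c) '' Set.Icc (((0:ℤ), (0:ℤ))) (((m:ℤ), (m:ℤ))) := by
      rintro _ ⟨u, rfl⟩
      refine ⟨(u.1 % (m : ℤ), u.2 % (m : ℤ)), ?_, ?_⟩
      · refine ⟨⟨Int.emod_nonneg u.1 (ne_of_gt hm0), Int.emod_nonneg u.2 (ne_of_gt hm0)⟩,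
          ⟨(Int.emod_lt_of_pos u.1 hm0).le, (Int.emod_lt_of_pos u.2 hm0).le⟩⟩
      · show shift (u.1 % (m : ℤ), u.2 % (m : ℤ)) c = shift u c
        have hq : shift ((m : ℤ) * (u.1 / (m : ℤ)), (m : ℤ) * (u.2 / (m : ℤ))) c = c := by
          have e : ((m : ℤ) * (u.1 / (m : ℤ)), (m : ℤ) * (u.2 / (m : ℤ)))
              = (u.1 / (m : ℤ)) • (((m:ℤ), (0:ℤ))) + (u.2 / (m : ℤ)) • (((0:ℤ), (m:ℤ))) := by
            rw [Prod.ext_iff]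
            constructor <;> simp [Prod.smul_fst, Prod.smul_snd, smul_eq_mul] <;> ring
          rw [e]
          exact shift_add_fix (shift_zsmul_fix _ hfix1) (shift_zsmul_fix _ hfix2)
        have e2 : u = ((m : ℤ) * (u.1 / (m : ℤ)), (m : ℤ) * (u.2 / (m : ℤ)))
            + (u.1 % (m : ℤ), u.2 % (m : ℤ)) := by
          rw [Prod.ext_iff]
          constructor
          · show u.1 = (m : ℤ) * (u.1 / (m : ℤ)) + u.1 % (m : ℤ)
            rw [add_comm]; exact (Int.emod_add_mul_ediv u.1 (m : ℤ)).symm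
          · show u.2 = (m : ℤ) * (u.2 / (m : ℤ)) + u.2 % (m : ℤ)
            rw [add_comm]; exact (Int.emod_add_mul_ediv u.2 (m : ℤ)).symm
        conv_rhs => rw [e2]
        rw [← shift_shift, hq]
    have hfin : (orbit c).Finite := (Set.Finite.image _ (Set.finite_Icc _ _)).subset horb_sub
    have hclosed : closure (orbit c) = orbit c := hfin.isClosed.closure_eq
    apply hnot0
    refine ⟨hcX, fun y hyX hyc => ?_⟩
    have hyc' : y ∈ closure (orbit c) := hyc
    rw [hclosed] at hyc'
    obtain ⟨u, rfl⟩ := hyc'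
    exact subset_closure ⟨-u, by
      show shift (-u) (shift u c) = c
      rw [shift_shift, add_neg_cancel, shift_zero]⟩

end CountableSubshift
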